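/- arXiv:1711.05107 — 3 statements merged into one kernel-verified Lean document; each statement's English description precedes it below -/
import Mathlib

section
/- On a compact 2n-dimensional ∂∂̄-complex symplectic manifold, q_σ(σ + σ̄) = (∫_X (σσ̄)^n)², and in particular q_σ(σ + σ̄) > 0 when σ is normalized so that ∫_X (σσ̄)^n is a positive real number. Abstract version: with q_σ(α) = (n/2)·I((σσ̄)^n)·I(α²(σσ̄)^{n-1}) + (1-n)·I(ασ^{n-1}σ̄^n)·I(ασ^nσ̄^{n-1}), σ^{n+1} = σ̄^{n+1} = 0, and I vanishing on σ^aσ̄^b unless a = b = n, one has q_σ(σ + σ̄) = (I((σσ̄)^n))². -/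
/-- The Beauville–Bogomolov–Fujiki quadratic form on an abstract commutative ℂ-algebra `A`
(modelling `H^*_{dR}(X, ℂ)` of a compact `2n`-dimensional ∂∂̄-complex symplectic manifold)
with linear functional `I : A → ℂ` (integration over `X`), classes `σ` and `σb` (the
conjugate `σ̄`):
`q_σ(α) = (n/2)·I((σσ̄)^n)·I(α²(σσ̄)^{n-1}) + (1-n)·I(ασ^{n-1}σ̄^n)·I(ασ^nσ̄^{n-1})`. -/
noncomputable def bbfForm {A : Type*} [CommRing A] [Algebra ℂ A]
    (n : ℕ) (I : A →ₗ[ℂ] ℂ) (σ σb α : A) : ℂ :=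
  ((n : ℂ) / 2) * I ((σ * σb) ^ n) * I (α ^ 2 * (σ * σb) ^ (n - 1))
    + (1 - (n : ℂ)) * I (α * σ ^ (n - 1) * σb ^ n) * I (α * σ ^ n * σb ^ (n - 1))

/-- `q_σ(σ + σ̄) = (I((σσ̄)^n))²` whenever `σ^{n+1} = σ̄^{n+1} = 0` and `I(σ^a σ̄^b) = 0`
for `(a,b) ≠ (n,n)`; in particular `q_σ(σ + σ̄) > 0` when `σ` is normalized so that
`I((σσ̄)^n)` is a positive real number. -/
theorem bbf_sigma_plus_conj {A : Type*} [CommRing A] [Algebra ℂ A]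
    (n : ℕ) (hn : 1 ≤ n) (I : A →ₗ[ℂ] ℂ) (σ σb : A)
    (hσ : σ ^ (n + 1) = 0) (hσb : σb ^ (n + 1) = 0)
    (hvan : ∀ a b : ℕ, ¬(a = n ∧ b = n) → I (σ ^ a * σb ^ b) = 0) :
    bbfForm n I σ σb (σ + σb) = (I ((σ * σb) ^ n)) ^ 2
      ∧ (∀ r : ℝ, 0 < r → I ((σ * σb) ^ n) = (r : ℂ) →
          0 < (bbfForm n I σ σb (σ + σb)).re ∧ (bbfForm n I σ σb (σ + σb)).im = 0) := by

  obtain ⟨m, rfl⟩ : ∃ m, n = m + 1 := ⟨n - 1, (Nat.succ_pred_eq_of_pos hn).symm⟩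
  set S : ℂ := I ((σ * σb) ^ (m + 1)) with hS
  have e1 : (σ + σb) ^ 2 * (σ * σb) ^ (m + 1 - 1)
      = σ ^ (m + 2) * σb ^ m + (σ ^ (m + 1) * σb ^ (m + 1) + σ ^ (m + 1) * σb ^ (m + 1))
        + σ ^ m * σb ^ (m + 2) := by
    simp only [Nat.add_sub_cancel]; ring
  have e2 : (σ + σb) * σ ^ (m + 1 - 1) * σb ^ (m + 1)
      = σ ^ (m + 1) * σb ^ (m + 1) + σ ^ m * σb ^ (m + 2) := by
    simp only [Nat.add_sub_cancel]; ring
  have e3 : (σ + σb) * σ ^ (m + 1) * σb ^ (m + 1 - 1)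
      = σ ^ (m + 2) * σb ^ m + σ ^ (m + 1) * σb ^ (m + 1) := by
    simp only [Nat.add_sub_cancel]; ring
  have hpow : (σ * σb) ^ (m + 1) = σ ^ (m + 1) * σb ^ (m + 1) := mul_pow σ σb (m + 1)
  have hSn : I (σ ^ (m + 1) * σb ^ (m + 1)) = S := by rw [hS, hpow]
  have hv1 : I (σ ^ (m + 2) * σb ^ m) = 0 := hvan _ _ (by omega)
  have hv2 : I (σ ^ m * σb ^ (m + 2)) = 0 := hvan _ _ (by omega)
  have key : bbfForm (m + 1) I σ σb (σ + σb) = S ^ 2 := by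
    unfold bbfForm
    rw [e1, e2, e3, map_add, map_add, map_add, map_add, map_add, hv1, hv2, hSn]
    push_cast
    ring
  refine ⟨key, fun r hr hrS => ?_⟩
  rw [key, hrS]
  constructor
  · rw [← Complex.ofReal_pow, Complex.ofReal_re]
    exact pow_pos hr 2
  · rw [← Complex.ofReal_pow, Complex.ofReal_im]
end

section
/- Product formula for the BBF form on a product of two K3 surfaces: let X = X₁ × X₂ with symplectic forms σᵢ on Xᵢ normalized by ∫_{Xᵢ} σᵢσ̄ᵢ = 1, and σ = σ₁ + σ₂. For φ = φ₁ + φ₂ with φᵢ ∈ H²(Xᵢ,ℂ) (pulled back), one has q_σ(φ) = 8(q_{σ₁}(φ₁) + q_{σ₂}(φ₂)) − 4·(∫_{X₁}φ₁σ̄₁ − ∫_{X₂}φ₂σ̄₂)·(∫_{X₁}φ₁σ₁ − ∫_{X₂}φ₂σ₂), where q_{σᵢ}(φᵢ) = (1/2)∫_{Xᵢ}φᵢ². Abstract version: in the tensor product of two 'surface-like' algebras with functionals I₁, I₂ extended by the Künneth product rule I(a⊗b) = I₁(a)I₂(b), with n = 2 and the BBF definition, the above identity holds. -/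
open TensorProduct

/-- The Künneth functional `I(a ⊗ b) = I₁(a)·I₂(b)` on `A₁ ⊗ A₂`. -/
noncomputable def kunnethFunctional {A₁ A₂ : Type*}
    [CommRing A₁] [Algebra ℂ A₁] [CommRing A₂] [Algebra ℂ A₂]
    (I₁ : A₁ →ₗ[ℂ] ℂ) (I₂ : A₂ →ₗ[ℂ] ℂ) : A₁ ⊗[ℂ] A₂ →ₗ[ℂ] ℂ :=
  (TensorProduct.lid ℂ ℂ).toLinearMap.comp (TensorProduct.map I₁ I₂)

/-- Product formula for the BBF form on a product `X = X₁ × X₂` of two K3 surfaces with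
symplectic forms `σᵢ` normalized by `∫ σᵢσ̄ᵢ = 1` and `σ = σ₁ + σ₂`:  for
`φ = φ₁ + φ₂` with `φᵢ ∈ H²(Xᵢ, ℂ)`,
`q_σ(φ) = 8(q_{σ₁}(φ₁) + q_{σ₂}(φ₂)) − 4(∫φ₁σ̄₁ − ∫φ₂σ̄₂)(∫φ₁σ₁ − ∫φ₂σ₂)`,
where `q_{σᵢ}(φᵢ) = (1/2)∫φᵢ²` and `q_σ(α) = I((σσ̄)²)·I(α²σσ̄) − I(ασσ̄²)·I(ασ²σ̄)`
(BBF with `n = 2`).  Abstract Künneth model: `Aᵢ = H^*(K3, ℂ)` are commutative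
ℂ-algebras with functionals `Iᵢ` vanishing outside top degree (encoded by the
vanishings below and `σᵢ² = σ̄ᵢ² = 0`), extended to `A₁ ⊗ A₂` by `I(a⊗b) = I₁(a)I₂(b)`. -/
theorem bbf_product_of_K3s {A₁ A₂ : Type*}
    [CommRing A₁] [Algebra ℂ A₁] [CommRing A₂] [Algebra ℂ A₂]
    (I₁ : A₁ →ₗ[ℂ] ℂ) (I₂ : A₂ →ₗ[ℂ] ℂ)
    (σ₁ σb₁ φ₁ : A₁) (σ₂ σb₂ φ₂ : A₂)
    (hσ₁ : σ₁ ^ 2 = 0) (hσb₁ : σb₁ ^ 2 = 0) (hσ₂ : σ₂ ^ 2 = 0) (hσb₂ : σb₂ ^ 2 = 0)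
    (hnorm₁ : I₁ (σ₁ * σb₁) = 1) (hnorm₂ : I₂ (σ₂ * σb₂) = 1)
    (h1₁ : I₁ 1 = 0) (h1₂ : I₂ 1 = 0)
    (hs₁ : I₁ σ₁ = 0) (hsb₁ : I₁ σb₁ = 0) (hs₂ : I₂ σ₂ = 0) (hsb₂ : I₂ σb₂ = 0)
    (hφ₁ : I₁ φ₁ = 0) (hφ₂ : I₂ φ₂ = 0)
    (htop₁ : I₁ (φ₁ * σ₁ * σb₁) = 0) (htop₂ : I₂ (φ₂ * σ₂ * σb₂) = 0) :
    letI I := kunnethFunctional I₁ I₂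
    letI σ : A₁ ⊗[ℂ] A₂ := σ₁ ⊗ₜ[ℂ] 1 + 1 ⊗ₜ[ℂ] σ₂
    letI σb : A₁ ⊗[ℂ] A₂ := σb₁ ⊗ₜ[ℂ] 1 + 1 ⊗ₜ[ℂ] σb₂
    letI φ : A₁ ⊗[ℂ] A₂ := φ₁ ⊗ₜ[ℂ] 1 + 1 ⊗ₜ[ℂ] φ₂
    I ((σ * σb) ^ 2) * I (φ ^ 2 * (σ * σb)) - I (φ * σ * σb ^ 2) * I (φ * σ ^ 2 * σb)
      = 8 * ((1 / 2 : ℂ) * I₁ (φ₁ ^ 2) + (1 / 2 : ℂ) * I₂ (φ₂ ^ 2))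
        - 4 * (I₁ (φ₁ * σb₁) - I₂ (φ₂ * σb₂)) * (I₁ (φ₁ * σ₁) - I₂ (φ₂ * σ₂)) := by
  have hI : ∀ (a : A₁) (b : A₂), kunnethFunctional I₁ I₂ (a ⊗ₜ[ℂ] b) = I₁ a * I₂ b := by
    intro a b; simp [kunnethFunctional]
  have m1 : (σ₁ ⊗ₜ[ℂ] (1:A₂) + (1:A₁) ⊗ₜ[ℂ] σ₂) * (σb₁ ⊗ₜ[ℂ] (1:A₂) + (1:A₁) ⊗ₜ[ℂ] σb₂)
      = (σ₁*σb₁) ⊗ₜ[ℂ] (1:A₂) + σ₁ ⊗ₜ[ℂ] σb₂ + σb₁ ⊗ₜ[ℂ] σ₂ + (1:A₁) ⊗ₜ[ℂ] (σ₂*σb₂) := by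
    simp only [add_mul, mul_add, Algebra.TensorProduct.tmul_mul_tmul, one_mul, mul_one]
    try abel
  have m2 : ((σ₁*σb₁) ⊗ₜ[ℂ] (1:A₂) + σ₁ ⊗ₜ[ℂ] σb₂ + σb₁ ⊗ₜ[ℂ] σ₂ + (1:A₁) ⊗ₜ[ℂ] (σ₂*σb₂))
      * ((σ₁*σb₁) ⊗ₜ[ℂ] (1:A₂) + σ₁ ⊗ₜ[ℂ] σb₂ + σb₁ ⊗ₜ[ℂ] σ₂ + (1:A₁) ⊗ₜ[ℂ] (σ₂*σb₂))
      = (σ₁*σb₁) ⊗ₜ[ℂ] (σ₂*σb₂) + (σ₁*σb₁) ⊗ₜ[ℂ] (σ₂*σb₂)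
        + (σ₁*σb₁) ⊗ₜ[ℂ] (σ₂*σb₂) + (σ₁*σb₁) ⊗ₜ[ℂ] (σ₂*σb₂) := by
    simp only [add_mul, mul_add, Algebra.TensorProduct.tmul_mul_tmul, one_mul, mul_one]
    ring_nf
    simp [hσ₁, hσb₁, hσ₂, hσb₂]
  have q1 : kunnethFunctional I₁ I₂
      (((σ₁ ⊗ₜ[ℂ] (1:A₂) + (1:A₁) ⊗ₜ[ℂ] σ₂) * (σb₁ ⊗ₜ[ℂ] (1:A₂) + (1:A₁) ⊗ₜ[ℂ] σb₂)) ^ 2)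
      = 4 := by
    rw [pow_two, m1, m2]
    simp [hI, hnorm₁, hnorm₂]
    norm_num
  have m3 : (φ₁ ⊗ₜ[ℂ] (1:A₂) + (1:A₁) ⊗ₜ[ℂ] φ₂) ^ 2
      = (φ₁*φ₁) ⊗ₜ[ℂ] (1:A₂) + φ₁ ⊗ₜ[ℂ] φ₂ + φ₁ ⊗ₜ[ℂ] φ₂ + (1:A₁) ⊗ₜ[ℂ] (φ₂*φ₂) := by
    rw [pow_two]
    simp only [add_mul, mul_add, Algebra.TensorProduct.tmul_mul_tmul, one_mul, mul_one]
    try abel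
  have q2 : kunnethFunctional I₁ I₂
      ((φ₁ ⊗ₜ[ℂ] (1:A₂) + (1:A₁) ⊗ₜ[ℂ] φ₂) ^ 2
        * ((σ₁ ⊗ₜ[ℂ] (1:A₂) + (1:A₁) ⊗ₜ[ℂ] σ₂) * (σb₁ ⊗ₜ[ℂ] (1:A₂) + (1:A₁) ⊗ₜ[ℂ] σb₂)))
      = I₁ (φ₁*φ₁) + I₂ (φ₂*φ₂)
        + 2 * (I₁ (φ₁*σ₁) * I₂ (φ₂*σb₂) + I₁ (φ₁*σb₁) * I₂ (φ₂*σ₂)) := by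
    rw [m3, m1]
    simp only [add_mul, mul_add, Algebra.TensorProduct.tmul_mul_tmul, one_mul, mul_one,
      map_add, hI, h1₁, h1₂, hs₁, hsb₁, hs₂, hsb₂, hφ₁, hφ₂, hnorm₁, hnorm₂,
      mul_zero, zero_mul, add_zero, zero_add, mul_one, one_mul]
    ring
  have m5 : (σb₁ ⊗ₜ[ℂ] (1:A₂) + (1:A₁) ⊗ₜ[ℂ] σb₂) ^ 2
      = σb₁ ⊗ₜ[ℂ] σb₂ + σb₁ ⊗ₜ[ℂ] σb₂ := by
    rw [pow_two]
    simp only [add_mul, mul_add, Algebra.TensorProduct.tmul_mul_tmul, one_mul, mul_one]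
    rw [← pow_two, ← pow_two, hσb₁, hσb₂]
    simp
    try abel
  have m7 : (σ₁ ⊗ₜ[ℂ] (1:A₂) + (1:A₁) ⊗ₜ[ℂ] σ₂) ^ 2
      = σ₁ ⊗ₜ[ℂ] σ₂ + σ₁ ⊗ₜ[ℂ] σ₂ := by
    rw [pow_two]
    simp only [add_mul, mul_add, Algebra.TensorProduct.tmul_mul_tmul, one_mul, mul_one]
    rw [← pow_two, ← pow_two, hσ₁, hσ₂]
    simp
    try abel
  have q3 : kunnethFunctional I₁ I₂
      ((φ₁ ⊗ₜ[ℂ] (1:A₂) + (1:A₁) ⊗ₜ[ℂ] φ₂) * (σ₁ ⊗ₜ[ℂ] (1:A₂) + (1:A₁) ⊗ₜ[ℂ] σ₂)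
        * (σb₁ ⊗ₜ[ℂ] (1:A₂) + (1:A₁) ⊗ₜ[ℂ] σb₂) ^ 2)
      = 2 * (I₁ (φ₁*σb₁) + I₂ (φ₂*σb₂)) := by
    rw [m5]
    simp only [add_mul, mul_add, Algebra.TensorProduct.tmul_mul_tmul, one_mul, mul_one,
      map_add, hI, h1₁, h1₂, hs₁, hsb₁, hs₂, hsb₂, hφ₁, hφ₂, hnorm₁, hnorm₂, htop₁, htop₂,
      mul_zero, zero_mul, add_zero, zero_add]
    ring
  have q4 : kunnethFunctional I₁ I₂
      ((φ₁ ⊗ₜ[ℂ] (1:A₂) + (1:A₁) ⊗ₜ[ℂ] φ₂) * (σ₁ ⊗ₜ[ℂ] (1:A₂) + (1:A₁) ⊗ₜ[ℂ] σ₂) ^ 2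
        * (σb₁ ⊗ₜ[ℂ] (1:A₂) + (1:A₁) ⊗ₜ[ℂ] σb₂))
      = 2 * (I₁ (φ₁*σ₁) + I₂ (φ₂*σ₂)) := by
    rw [m7]
    simp only [add_mul, mul_add, Algebra.TensorProduct.tmul_mul_tmul, one_mul, mul_one,
      map_add, hI, h1₁, h1₂, hs₁, hsb₁, hs₂, hsb₂, hφ₁, hφ₂, hnorm₁, hnorm₂, htop₁, htop₂,
      mul_zero, zero_mul, add_zero, zero_add]
    ring
  show kunnethFunctional I₁ I₂
      (((σ₁ ⊗ₜ[ℂ] (1:A₂) + (1:A₁) ⊗ₜ[ℂ] σ₂) * (σb₁ ⊗ₜ[ℂ] (1:A₂) + (1:A₁) ⊗ₜ[ℂ] σb₂)) ^ 2)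
    * kunnethFunctional I₁ I₂
      ((φ₁ ⊗ₜ[ℂ] (1:A₂) + (1:A₁) ⊗ₜ[ℂ] φ₂) ^ 2
        * ((σ₁ ⊗ₜ[ℂ] (1:A₂) + (1:A₁) ⊗ₜ[ℂ] σ₂) * (σb₁ ⊗ₜ[ℂ] (1:A₂) + (1:A₁) ⊗ₜ[ℂ] σb₂)))
    - kunnethFunctional I₁ I₂
      ((φ₁ ⊗ₜ[ℂ] (1:A₂) + (1:A₁) ⊗ₜ[ℂ] φ₂) * (σ₁ ⊗ₜ[ℂ] (1:A₂) + (1:A₁) ⊗ₜ[ℂ] σ₂)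
        * (σb₁ ⊗ₜ[ℂ] (1:A₂) + (1:A₁) ⊗ₜ[ℂ] σb₂) ^ 2)
    * kunnethFunctional I₁ I₂
      ((φ₁ ⊗ₜ[ℂ] (1:A₂) + (1:A₁) ⊗ₜ[ℂ] φ₂) * (σ₁ ⊗ₜ[ℂ] (1:A₂) + (1:A₁) ⊗ₜ[ℂ] σ₂) ^ 2
        * (σb₁ ⊗ₜ[ℂ] (1:A₂) + (1:A₁) ⊗ₜ[ℂ] σb₂))
    = 8 * ((1 / 2 : ℂ) * I₁ (φ₁ ^ 2) + (1 / 2 : ℂ) * I₂ (φ₂ ^ 2))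
      - 4 * (I₁ (φ₁ * σb₁) - I₂ (φ₂ * σb₂)) * (I₁ (φ₁ * σ₁) - I₂ (φ₂ * σ₂))
  rw [q1, q2, q3, q4, pow_two φ₁, pow_two φ₂]
  ring
end

section
/- Four-torus deformation computation: in the exterior algebra on generators w¹,…,w⁴,w̄¹,…,w̄⁴ (a model of H*(T⁸,ℂ) for a 4-dimensional complex torus), let σ = w¹∧w² + w³∧w⁴ (where w¹ = z¹ + t₁z̄³, w² = z² + t₂z̄⁴, w³ = z³ + t₁z̄¹, w⁴ = z⁴ + t₂z̄², expressed in a fixed basis z¹,…,z⁴,z̄¹,…,z̄⁴) and σ_t = w¹∧w² + w³∧w⁴ + t₃w¹∧w³ + t₄w²∧w⁴. With I the coefficient of Vol = z¹∧z²∧z³∧z⁴∧z̄¹∧z̄²∧z̄³∧z̄⁴ and σ₀ = z¹∧z² + z³∧z⁴, one has: I((σ₀σ̄₀)²) = 4, I(σ_t²σ₀σ̄₀) = 4t₁t₂(1−t₃t₄), I(σ_tσ₀σ̄₀²) = 4, I(σ_tσ₀²σ̄₀) = 4t₁t₂; hence q_{σ₀}(σ_t) = −16·t₁t₂t₃t₄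 (times (∫Vol)²), which is not identically zero. -/
set_option synthInstance.maxHeartbeats 800000
set_option maxHeartbeats 1000000

/-- The `i`-th standard basis vector of `ℂ⁸`, viewed inside the exterior algebra `Λ*(ℂ⁸)`
(a model of `H^*(T⁸, ℂ)` for a 4-dimensional complex torus); indices `0,1,2,3`
correspond to `z¹,z²,z³,z⁴` and `4,5,6,7` to `z̄¹,z̄²,z̄³,z̄⁴`. -/
noncomputable def e8 (i : Fin 8) : ExteriorAlgebra ℂ (Fin 8 → ℂ) :=
  ExteriorAlgebra.ι ℂ (Pi.single i 1)


lemma e8_sq (i : Fin 8) : e8 i * e8 i = 0 := ExteriorAlgebra.ι_sq_zero _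

lemma e8_swap (i j : Fin 8) (_h : j < i) : e8 i * e8 j = -(e8 j * e8 i) :=
  eq_neg_of_add_eq_zero_left (ExteriorAlgebra.ι_add_mul_swap _ _)

lemma e8_sq' (i : Fin 8) (x : ExteriorAlgebra ℂ (Fin 8 → ℂ)) : e8 i * (e8 i * x) = 0 := by
  rw [← mul_assoc, e8_sq, zero_mul]

lemma e8_swap' (i j : Fin 8) (h : j < i) (x : ExteriorAlgebra ℂ (Fin 8 → ℂ)) :
    e8 i * (e8 j * x) = -(e8 j * (e8 i * x)) := by
  rw [← mul_assoc, e8_swap i j h, neg_mul, mul_assoc]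

/-- Four-torus deformation computation: with `w¹ = z¹ + t₁z̄³`, `w² = z² + t₂z̄⁴`,
`w³ = z³ + t₁z̄¹`, `w⁴ = z⁴ + t₂z̄²`, `σ_t = w¹∧w² + w³∧w⁴ + t₃w¹∧w³ + t₄w²∧w⁴`,
`σ₀ = z¹∧z² + z³∧z⁴`, `σ̄₀ = z̄¹∧z̄² + z̄³∧z̄⁴` and `Vol = z¹∧⋯∧z⁴∧z̄¹∧⋯∧z̄⁴`:
`(σ₀σ̄₀)² = 4·Vol`, `σ_t²σ₀σ̄₀ = 4t₁t₂(1−t₃t₄)·Vol`, `σ_tσ₀σ̄₀² = 4·Vol`,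
`σ_tσ₀²σ̄₀ = 4t₁t₂·Vol`; hence (with `I` the coefficient of `Vol`, `n = 2`)
`q_{σ₀}(σ_t) = I((σ₀σ̄₀)²)·I(σ_t²σ₀σ̄₀) − I(σ_tσ₀σ̄₀²)·I(σ_tσ₀²σ̄₀) = −16·t₁t₂t₃t₄`,
which is not identically zero. -/
theorem four_torus_deformation (t1 t2 t3 t4 : ℂ)
    (w1 w2 w3 w4 σ0 σb0 σt Vol : ExteriorAlgebra ℂ (Fin 8 → ℂ))
    (hw1 : w1 = e8 0 + t1 • e8 6) (hw2 : w2 = e8 1 + t2 • e8 7)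
    (hw3 : w3 = e8 2 + t1 • e8 4) (hw4 : w4 = e8 3 + t2 • e8 5)
    (hσ0 : σ0 = e8 0 * e8 1 + e8 2 * e8 3)
    (hσb0 : σb0 = e8 4 * e8 5 + e8 6 * e8 7)
    (hσt : σt = w1 * w2 + w3 * w4 + t3 • (w1 * w3) + t4 • (w2 * w4))
    (hVol : Vol = e8 0 * e8 1 * e8 2 * e8 3 * e8 4 * e8 5 * e8 6 * e8 7) :
    (σ0 * σb0) ^ 2 = (4 : ℂ) • Vol
      ∧ σt ^ 2 * (σ0 * σb0) = (4 * t1 * t2 * (1 - t3 * t4)) • Vol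
      ∧ σt * σ0 * σb0 ^ 2 = (4 : ℂ) • Vol
      ∧ σt * σ0 ^ 2 * σb0 = (4 * t1 * t2) • Vol
      ∧ (4 : ℂ) * (4 * t1 * t2 * (1 - t3 * t4)) - 4 * (4 * t1 * t2)
          = -16 * (t1 * t2 * t3 * t4) := by
  subst hw1 hw2 hw3 hw4 hσ0 hσb0 hσt hVol
  refine ⟨?_, ?_, ?_, ?_, by ring⟩ <;>
  · simp (config := { decide := true }) only [pow_two, mul_add, add_mul, smul_mul_assoc,
      mul_smul_comm, smul_smul, mul_assoc, smul_add, neg_mul, mul_neg, neg_neg, smul_neg,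
      neg_add, e8_sq, e8_sq', e8_swap, e8_swap', mul_zero, zero_mul, smul_zero,
      add_zero, zero_add]
    module
end
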